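/- For any sequence of nonnegative reals (α_j)_{j≥1} with Σ_{j≥1} α_j < 1, the sum over all finite subsets u of the positive integers of (|u|+1)! · Π_{j∈u} α_j is at most (1/(1 - Σ_{j≥1} α_j))². -/
import Mathlib

open Nat

private lemma binom_aux (x y : ℝ) (hx : 0 ≤ x) (hy : 0 ≤ y) (m : ℕ) :
    x ^ (m + 1) + (m + 1 : ℝ) * y * x ^ m ≤ (x + y) ^ (m + 1) := by
  induction m with
  | zero => simp
  | succ m ih =>
      push_cast
      have hxp : (0:ℝ) ≤ x ^ m := pow_nonneg hx m
      have h2 : (x + y) ^ (m + 2) = (x + y) * (x + y) ^ (m + 1) := by ring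
      have h3 : (x + y) * (x ^ (m + 1) + (m + 1 : ℝ) * y * x ^ m) ≤ (x + y) ^ (m + 2) := by
        rw [h2]
        exact mul_le_mul_of_nonneg_left ih (by linarith)
      have h4 : x ^ (m + 2) + (m + 2 : ℝ) * y * x ^ (m + 1) ≤
          (x + y) * (x ^ (m + 1) + (m + 1 : ℝ) * y * x ^ m) := by
        have : (x + y) * (x ^ (m + 1) + (m + 1 : ℝ) * y * x ^ m)
            = x ^ (m + 2) + (m + 2 : ℝ) * y * x ^ (m + 1) + (m + 1 : ℝ) * y ^ 2 * x ^ m := by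
          ring
        nlinarith [mul_nonneg (mul_nonneg (by positivity : (0:ℝ) ≤ (m+1:ℝ)) (sq_nonneg y)) hxp]
      linarith

private lemma esymm_bound (α : ℕ+ → ℝ) (hα : ∀ j, 0 ≤ α j) (T : Finset ℕ+) :
    ∀ k : ℕ, (k ! : ℝ) * ∑ u ∈ T.powersetCard k, ∏ j ∈ u, α j ≤ (∑ j ∈ T, α j) ^ k := by
  classical
  induction T using Finset.induction_on with
  | empty =>
      intro k
      cases k with
      | zero => simp
      | succ m =>
          rw [Finset.powersetCard_eq_empty.mpr (by simp)]
          simp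
  | @insert a T ha ih =>
      intro k
      have hsumT : (0:ℝ) ≤ ∑ j ∈ T, α j := Finset.sum_nonneg fun j _ => hα j
      cases k with
      | zero => simp
      | succ m =>
          rw [Finset.powersetCard_succ_insert ha]
          have hdisj : Disjoint (Finset.powersetCard (m+1) T)
              ((Finset.powersetCard m T).image (insert a)) := by
            rw [Finset.disjoint_right]
            intro u hu hu'
            obtain ⟨v, hv, rfl⟩ := Finset.mem_image.mp hu
            have := (Finset.mem_powersetCard.mp hu').1
            exact ha (this (Finset.mem_insert_self a v))
          rw [Finset.sum_union hdisj]
          have himg : ∑ u ∈ (Finset.powersetCard m T).image (insert a), ∏ j ∈ u, α j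
              = α a * ∑ u ∈ Finset.powersetCard m T, ∏ j ∈ u, α j := by
            rw [Finset.sum_image, Finset.mul_sum]
            · refine Finset.sum_congr rfl fun u hu => ?_
              have hau : a ∉ u := fun h => ha ((Finset.mem_powersetCard.mp hu).1 h)
              rw [Finset.prod_insert hau]
            · intro u hu v hv h
              have hau : a ∉ u := fun h' => ha ((Finset.mem_powersetCard.mp hu).1 h')
              have hav : a ∉ v := fun h' => ha ((Finset.mem_powersetCard.mp hv).1 h')
              have h' := congrArg (fun s => Finset.erase s a) h
              simpa [Finset.erase_insert hau, Finset.erase_insert hav] using h'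
          rw [himg, Finset.sum_insert ha]
          have e1 : (0:ℝ) ≤ ∑ u ∈ Finset.powersetCard m T, ∏ j ∈ u, α j :=
            Finset.sum_nonneg fun u _ => Finset.prod_nonneg fun j _ => hα j
          have key : ((m+1)! : ℝ) * (∑ u ∈ Finset.powersetCard (m+1) T, ∏ j ∈ u, α j
              + α a * ∑ u ∈ Finset.powersetCard m T, ∏ j ∈ u, α j)
              ≤ (∑ j ∈ T, α j) ^ (m+1) + (m + 1 : ℝ) * α a * (∑ j ∈ T, α j) ^ m := by
            have h1 := ih (m+1)
            have h2 := ih m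
            have hfac : ((m+1)! : ℝ) = (m + 1 : ℝ) * (m ! : ℝ) := by
              rw [Nat.factorial_succ]; push_cast; ring
            have h2' : (m + 1 : ℝ) * α a * ((m ! : ℝ) * ∑ u ∈ Finset.powersetCard m T, ∏ j ∈ u, α j)
                ≤ (m + 1 : ℝ) * α a * (∑ j ∈ T, α j) ^ m := by
              apply mul_le_mul_of_nonneg_left h2
              have := hα a
              positivity
            calc ((m+1)! : ℝ) * (∑ u ∈ Finset.powersetCard (m+1) T, ∏ j ∈ u, α j
                + α a * ∑ u ∈ Finset.powersetCard m T, ∏ j ∈ u, α j)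
                = ((m+1)! : ℝ) * ∑ u ∈ Finset.powersetCard (m+1) T, ∏ j ∈ u, α j
                  + (m + 1 : ℝ) * α a * ((m ! : ℝ) * ∑ u ∈ Finset.powersetCard m T, ∏ j ∈ u, α j) := by
                  rw [hfac]; ring
              _ ≤ _ := add_le_add h1 h2'
          refine key.trans ?_
          have hcomm : α a + ∑ j ∈ T, α j = ∑ j ∈ T, α j + α a := add_comm _ _
          rw [hcomm]
          exact binom_aux _ _ hsumT (hα a) m

theorem sum_finsets_factorial_bound (α : ℕ+ → ℝ) (hα : ∀ j, 0 ≤ α j)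
    (hsum : Summable α) (h1 : ∑' j, α j < 1) :
    ∑' u : Finset ℕ+, ((u.card + 1)! : ℝ) * ∏ j ∈ u, α j ≤
      (1 / (1 - ∑' j, α j)) ^ 2 := by
  classical
  set S := ∑' j, α j with hS
  have hS0 : 0 ≤ S := tsum_nonneg hα
  have h1S : 0 < 1 - S := by linarith
  have hB : (0:ℝ) ≤ (1 / (1 - S)) ^ 2 := sq_nonneg _
  refine tsum_le_of_sum_le' hB fun F => ?_
  set T : Finset ℕ+ := F.sup id with hT
  have hsub : F ⊆ T.powerset := by
    intro u hu
    exact Finset.mem_powerset.mpr (Finset.le_sup (f := id) hu)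
  have hnn : ∀ u : Finset ℕ+, (0:ℝ) ≤ ((u.card + 1)! : ℝ) * ∏ j ∈ u, α j := by
    intro u
    exact mul_nonneg (by positivity) (Finset.prod_nonneg fun j _ => hα j)
  have step1 : ∑ u ∈ F, ((u.card + 1)! : ℝ) * ∏ j ∈ u, α j
      ≤ ∑ u ∈ T.powerset, ((u.card + 1)! : ℝ) * ∏ j ∈ u, α j :=
    Finset.sum_le_sum_of_subset_of_nonneg hsub fun u _ _ => hnn u
  have hST : ∑ j ∈ T, α j ≤ S := Summable.sum_le_tsum T (fun j _ => hα j) hsum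
  have hSTnn : (0:ℝ) ≤ ∑ j ∈ T, α j := Finset.sum_nonneg fun j _ => hα j
  have step2 : ∑ u ∈ T.powerset, ((u.card + 1)! : ℝ) * ∏ j ∈ u, α j
      ≤ ∑ k ∈ Finset.range (T.card + 1), (k + 1 : ℝ) * S ^ k := by
    rw [Finset.sum_powerset]
    refine Finset.sum_le_sum fun k _ => ?_
    have hcong : ∑ u ∈ Finset.powersetCard k T, ((u.card + 1)! : ℝ) * ∏ j ∈ u, α j
        = ((k + 1)! : ℝ) * ∑ u ∈ Finset.powersetCard k T, ∏ j ∈ u, α j := by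
      rw [Finset.mul_sum]
      refine Finset.sum_congr rfl fun u hu => ?_
      rw [(Finset.mem_powersetCard.mp hu).2]
    rw [hcong]
    have hfac : ((k + 1)! : ℝ) = (k + 1 : ℝ) * (k ! : ℝ) := by
      rw [Nat.factorial_succ]; push_cast; ring
    calc ((k + 1)! : ℝ) * ∑ u ∈ Finset.powersetCard k T, ∏ j ∈ u, α j
        = (k + 1 : ℝ) * ((k ! : ℝ) * ∑ u ∈ Finset.powersetCard k T, ∏ j ∈ u, α j) := by
          rw [hfac]; ring
      _ ≤ (k + 1 : ℝ) * (∑ j ∈ T, α j) ^ k := by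
          apply mul_le_mul_of_nonneg_left (esymm_bound α hα T k)
          positivity
      _ ≤ (k + 1 : ℝ) * S ^ k := by
          apply mul_le_mul_of_nonneg_left (pow_le_pow_left₀ hSTnn hST k)
          positivity
  have hnorm : ‖S‖ < 1 := by rw [Real.norm_eq_abs, abs_of_nonneg hS0]; exact h1
  have hsum1 : Summable fun k : ℕ => (k : ℝ) * S ^ k := by
    simpa using summable_pow_mul_geometric_of_norm_lt_one 1 hnorm
  have hsum2 : Summable fun k : ℕ => S ^ k := summable_geometric_of_lt_one hS0 h1
  have hsum3 : Summable fun k : ℕ => (k + 1 : ℝ) * S ^ k := by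
    have := hsum1.add hsum2
    convert this using 2 with k
    ring
  have step3 : ∑ k ∈ Finset.range (T.card + 1), (k + 1 : ℝ) * S ^ k
      ≤ ∑' k : ℕ, (k + 1 : ℝ) * S ^ k := by
    refine Summable.sum_le_tsum _ (fun k _ => ?_) hsum3
    positivity
  have htsum : ∑' k : ℕ, (k + 1 : ℝ) * S ^ k = (1 / (1 - S)) ^ 2 := by
    have e1 : ∑' k : ℕ, (k + 1 : ℝ) * S ^ k
        = (∑' k : ℕ, (k : ℝ) * S ^ k) + ∑' k : ℕ, S ^ k := by
      rw [← Summable.tsum_add hsum1 hsum2]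
      congr 1 with k
      ring
    rw [e1, tsum_coe_mul_geometric_of_norm_lt_one hnorm, tsum_geometric_of_lt_one hS0 h1]
    field_simp
    ring
  linarith [step1, step2, step3, htsum.le, htsum.ge]
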